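/- arXiv:2404.02264 — 4 statements merged into one kernel-verified Lean document; each statement's English description precedes it below -/
import Mathlib

section
/- In the multiplicative monoid of 3×3 matrices over the polynomial ring ℚ[X], the identity matrix does not belong to the subsemigroup generated by the set { A_i, B_i, C_i, D_i : i ∈ ℕ }. -/
open Polynomial

/-- `A_i = [[1, Xⁱ, X^{2i+1}], [0, 1, 0], [0, 0, 1]]` over `ℚ[X]`. -/
noncomputable def Amat (i : ℕ) : Matrix (Fin 3) (Fin 3) ℚ[X] :=
  !![1, X ^ i, X ^ (2 * i + 1); 0, 1, 0; 0, 0, 1]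

/-- `B_i = [[1, −Xⁱ, X^{2i+1}], [0, 1, 0], [0, 0, 1]]` over `ℚ[X]`. -/
noncomputable def Bmat (i : ℕ) : Matrix (Fin 3) (Fin 3) ℚ[X] :=
  !![1, -X ^ i, X ^ (2 * i + 1); 0, 1, 0; 0, 0, 1]

/-- `C_i = [[1, 0, X^{2i+1}], [0, 1, Xⁱ], [0, 0, 1]]` over `ℚ[X]`. -/
noncomputable def Cmat (i : ℕ) : Matrix (Fin 3) (Fin 3) ℚ[X] :=
  !![1, 0, X ^ (2 * i + 1); 0, 1, X ^ i; 0, 0, 1]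

/-- `D_i = [[1, 0, X^{2i+1}], [0, 1, −Xⁱ], [0, 0, 1]]` over `ℚ[X]`. -/
noncomputable def Dmat (i : ℕ) : Matrix (Fin 3) (Fin 3) ℚ[X] :=
  !![1, 0, X ^ (2 * i + 1); 0, 1, -X ^ i; 0, 0, 1]

def Good (M : Matrix (Fin 3) (Fin 3) ℚ[X]) : Prop :=
  M 0 0 = 1 ∧ M 1 1 = 1 ∧ M 2 2 = 1 ∧ M 1 0 = 0 ∧ M 2 0 = 0 ∧ M 2 1 = 0 ∧
  ∃ d : ℕ, 0 < d ∧ (M 0 1).degree ≤ ((d - 1) / 2 : ℕ) ∧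
    (M 1 2).degree ≤ ((d - 1) / 2 : ℕ) ∧ (M 0 2).degree ≤ (d : ℕ) ∧
    0 < (M 0 2).coeff d

lemma good_mul {M N : Matrix (Fin 3) (Fin 3) ℚ[X]} (hM : Good M) (hN : Good N) :
    Good (M * N) := by
  obtain ⟨hM00, hM11, hM22, hM10, hM20, hM21, d1, hd1, ha1, hb1, hc1, hp1⟩ := hM
  obtain ⟨hN00, hN11, hN22, hN10, hN20, hN21, d2, hd2, ha2, hb2, hc2, hp2⟩ := hN
  have e01 : (M * N) 0 1 = M 0 1 + N 0 1 := by
    simp [Matrix.mul_apply, Fin.sum_univ_three, hM00, hN11, hN21, add_comm]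
  have e12 : (M * N) 1 2 = M 1 2 + N 1 2 := by
    simp [Matrix.mul_apply, Fin.sum_univ_three, hM10, hM11, hN22, add_comm]
  have e02 : (M * N) 0 2 = M 0 2 + N 0 2 + M 0 1 * N 1 2 := by
    simp [Matrix.mul_apply, Fin.sum_univ_three, hM00, hN22]
    ring
  refine ⟨?_, ?_, ?_, ?_, ?_, ?_, max d1 d2, lt_max_of_lt_left hd1, ?_, ?_, ?_, ?_⟩
  · simp [Matrix.mul_apply, Fin.sum_univ_three, hM00, hN00, hN10, hN20]
  · simp [Matrix.mul_apply, Fin.sum_univ_three, hM10, hM11, hN11, hN21]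
  · simp [Matrix.mul_apply, Fin.sum_univ_three, hM20, hM21, hM22, hN22]
  · simp [Matrix.mul_apply, Fin.sum_univ_three, hM10, hM11, hN00, hN10, hN20]
  · simp [Matrix.mul_apply, Fin.sum_univ_three, hM20, hM21, hM22, hN00, hN10, hN20]
  · simp [Matrix.mul_apply, Fin.sum_univ_three, hM20, hM21, hM22, hN10, hN20, hN21]
  · rw [e01]
    refine (degree_add_le _ _).trans (max_le (ha1.trans ?_) (ha2.trans ?_)) <;>
      exact_mod_cast Nat.cast_le.mpr (Nat.div_le_div_right (Nat.sub_le_sub_right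
        (by first | exact le_max_left d1 d2 | exact le_max_right d1 d2) 1))
  · rw [e12]
    refine (degree_add_le _ _).trans (max_le (hb1.trans ?_) (hb2.trans ?_)) <;>
      exact_mod_cast Nat.cast_le.mpr (Nat.div_le_div_right (Nat.sub_le_sub_right
        (by first | exact le_max_left d1 d2 | exact le_max_right d1 d2) 1))
  · rw [e02]
    have hab : (M 0 1 * N 1 2).degree ≤ (((d1 - 1) / 2 + (d2 - 1) / 2 : ℕ) : WithBot ℕ) := by
      refine (degree_mul_le _ _).trans ?_
      exact_mod_cast add_le_add ha1 hb2
    have hlt : ((d1 - 1) / 2 + (d2 - 1) / 2 : ℕ) ≤ max d1 d2 := by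
      have h1 : (d1 - 1) / 2 ≤ (max d1 d2 - 1) / 2 :=
        Nat.div_le_div_right (Nat.sub_le_sub_right (le_max_left _ _) 1)
      have h2 : (d2 - 1) / 2 ≤ (max d1 d2 - 1) / 2 :=
        Nat.div_le_div_right (Nat.sub_le_sub_right (le_max_right _ _) 1)
      omega
    refine (degree_add_le _ _).trans (max_le ((degree_add_le _ _).trans (max_le ?_ ?_)) ?_)
    · exact hc1.trans (by exact_mod_cast Nat.cast_le.mpr (le_max_left d1 d2))
    · exact hc2.trans (by exact_mod_cast Nat.cast_le.mpr (le_max_right d1 d2))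
    · exact hab.trans (by exact_mod_cast Nat.cast_le.mpr hlt)
  · rw [e02]
    set d := max d1 d2 with hd
    have habz : (M 0 1 * N 1 2).coeff d = 0 := by
      apply coeff_eq_zero_of_degree_lt
      refine lt_of_le_of_lt ((degree_mul_le _ _).trans (by exact_mod_cast add_le_add ha1 hb2)) ?_
      have : (d1 - 1) / 2 + (d2 - 1) / 2 < d := by
        have h1 : (d1 - 1) / 2 ≤ (d - 1) / 2 :=
          Nat.div_le_div_right (Nat.sub_le_sub_right (le_max_left _ _) 1)
        have h2 : (d2 - 1) / 2 ≤ (d - 1) / 2 :=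
          Nat.div_le_div_right (Nat.sub_le_sub_right (le_max_right _ _) 1)
        have hd0 : 0 < d := lt_max_of_lt_left hd1
        omega
      exact_mod_cast Nat.cast_lt.mpr this
    have key : ∀ (c : ℚ[X]) (e : ℕ), e ≤ d → c.degree ≤ (e : WithBot ℕ) → 0 < c.coeff e →
        (0 ≤ c.coeff d ∧ (e = d → 0 < c.coeff d)) := by
      intro c e he hdeg hpos
      rcases eq_or_lt_of_le he with h | h
      · subst h; exact ⟨le_of_lt hpos, fun _ => hpos⟩
      · have : c.coeff d = 0 := coeff_eq_zero_of_degree_lt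
          (lt_of_le_of_lt hdeg (by exact_mod_cast Nat.cast_lt.mpr h))
        exact ⟨by rw [this], fun hh => absurd hh (by omega)⟩
    have k1 := key (M 0 2) d1 (le_max_left _ _) hc1 hp1
    have k2 := key (N 0 2) d2 (le_max_right _ _) hc2 hp2
    rw [coeff_add, coeff_add, habz, add_zero]
    rcases max_cases d1 d2 with ⟨h, _⟩ | ⟨h, _⟩
    · have := k1.2 h.symm; linarith [k2.1]
    · have := k2.2 h.symm; linarith [k1.1]

/-- In the multiplicative monoid of `3×3` matrices over `ℚ[X]`, the
identity matrix does not belong to the subsemigroup generated by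
`{ A_i, B_i, C_i, D_i : i ∈ ℕ }`. -/
theorem one_not_mem_closure_ABCD :
    (1 : Matrix (Fin 3) (Fin 3) ℚ[X]) ∉
      Subsemigroup.closure
        {M : Matrix (Fin 3) (Fin 3) ℚ[X] |
          ∃ i : ℕ, M = Amat i ∨ M = Bmat i ∨ M = Cmat i ∨ M = Dmat i} := by
  intro h
  have hgood : Good (1 : Matrix (Fin 3) (Fin 3) ℚ[X]) := by
    refine Subsemigroup.closure_induction ?_ (fun _ _ _ _ hx hy => good_mul hx hy) h
    rintro M ⟨i, hM | hM | hM | hM⟩ <;> subst hM <;>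
      refine ⟨by simp [Amat, Bmat, Cmat, Dmat, Matrix.vecHead, Matrix.vecTail], by simp [Amat, Bmat, Cmat, Dmat, Matrix.vecHead, Matrix.vecTail],
        by simp [Amat, Bmat, Cmat, Dmat, Matrix.vecHead, Matrix.vecTail], by simp [Amat, Bmat, Cmat, Dmat, Matrix.vecHead, Matrix.vecTail],
        by simp [Amat, Bmat, Cmat, Dmat, Matrix.vecHead, Matrix.vecTail], by simp [Amat, Bmat, Cmat, Dmat, Matrix.vecHead, Matrix.vecTail],
        2 * i + 1, by omega, ?_, ?_, ?_, ?_⟩ <;>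
      simp [Amat, Bmat, Cmat, Dmat, Matrix.vecHead, Matrix.vecTail, degree_X_pow, coeff_X_pow, Nat.add_sub_cancel,
        Nat.mul_div_cancel_left]
  obtain ⟨-, -, -, -, -, -, d, -, -, -, -, hpos⟩ := hgood
  simp [Matrix.one_apply] at hpos
end

section
/- Work in GL(3, ℚ(X)), where ℚ(X) is the field of rational functions over ℚ, and regard the matrices A_i, B_i, C_i, D_i (i ∈ ℕ) as elements of GL(3, ℚ(X)) (each has determinant 1, hence is invertible). Let N be the subgroup of GL(3, ℚ(X)) generated by { A_i, B_i, C_i, D_i : i ∈ ℕ }. Then an element g ∈ GL(3, ℚ(X)) lies in N if and only if the matrix of g is upper unitriangular (entries below the diagonal are 0 and diagonal entries are 1) and its (1,2), (1,3) and (2,3) entries all lie in the image of ℤ[X] in ℚ(X) (i.e., are polynomials with integer coefficients). -/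
noncomputable section

/-- `A_i` as a matrix over `ℚ(X)`. -/
def AmatR (i : ℕ) : Matrix (Fin 3) (Fin 3) (RatFunc ℚ) :=
  !![1, RatFunc.X ^ i, RatFunc.X ^ (2 * i + 1); 0, 1, 0; 0, 0, 1]

/-- `B_i` as a matrix over `ℚ(X)`. -/
def BmatR (i : ℕ) : Matrix (Fin 3) (Fin 3) (RatFunc ℚ) :=
  !![1, -RatFunc.X ^ i, RatFunc.X ^ (2 * i + 1); 0, 1, 0; 0, 0, 1]

/-- `C_i` as a matrix over `ℚ(X)`. -/
def CmatR (i : ℕ) : Matrix (Fin 3) (Fin 3) (RatFunc ℚ) :=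
  !![1, 0, RatFunc.X ^ (2 * i + 1); 0, 1, RatFunc.X ^ i; 0, 0, 1]

/-- `D_i` as a matrix over `ℚ(X)`. -/
def DmatR (i : ℕ) : Matrix (Fin 3) (Fin 3) (RatFunc ℚ) :=
  !![1, 0, RatFunc.X ^ (2 * i + 1); 0, 1, -RatFunc.X ^ i; 0, 0, 1]

/-- The generating set `{ A_i, B_i, C_i, D_i : i ∈ ℕ }`, viewed inside
`GL(3, ℚ(X))` (each of these matrices has determinant `1`, hence is invertible). -/
def genSetR : Set (GL (Fin 3) (RatFunc ℚ)) :=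
  {g | ∃ i : ℕ,
    (g : Matrix (Fin 3) (Fin 3) (RatFunc ℚ)) = AmatR i ∨
    (g : Matrix (Fin 3) (Fin 3) (RatFunc ℚ)) = BmatR i ∨
    (g : Matrix (Fin 3) (Fin 3) (RatFunc ℚ)) = CmatR i ∨
    (g : Matrix (Fin 3) (Fin 3) (RatFunc ℚ)) = DmatR i}

/-- The image of `ℤ[X]` in `ℚ(X)`: elements of `ℚ(X)` that are polynomials with
integer coefficients. -/
def IsIntPoly (f : RatFunc ℚ) : Prop :=
  ∃ p : Polynomial ℤ,
    f = algebraMap (Polynomial ℚ) (RatFunc ℚ) (p.map (Int.castRingHom ℚ))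

namespace St17
open Polynomial

abbrev K := RatFunc ℚ

def φ : ℤ[X] →+* K :=
  (algebraMap (Polynomial ℚ) K).comp (Polynomial.mapRingHom (Int.castRingHom ℚ))

lemma φ_X : φ X = RatFunc.X := by
  simp [φ, RatFunc.algebraMap_X]

lemma isIntPoly_iff (f : K) : IsIntPoly f ↔ ∃ p : ℤ[X], f = φ p := by
  simp [IsIntPoly, φ, Polynomial.coe_mapRingHom]

lemma IsIntPoly.add {f g : K} (hf : IsIntPoly f) (hg : IsIntPoly g) : IsIntPoly (f + g) := by
  rw [isIntPoly_iff] at *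
  obtain ⟨p, rfl⟩ := hf; obtain ⟨q, rfl⟩ := hg
  exact ⟨p + q, (map_add φ p q).symm⟩

lemma IsIntPoly.mul {f g : K} (hf : IsIntPoly f) (hg : IsIntPoly g) : IsIntPoly (f * g) := by
  rw [isIntPoly_iff] at *
  obtain ⟨p, rfl⟩ := hf; obtain ⟨q, rfl⟩ := hg
  exact ⟨p * q, (map_mul φ p q).symm⟩

lemma IsIntPoly.neg {f : K} (hf : IsIntPoly f) : IsIntPoly (-f) := by
  rw [isIntPoly_iff] at *
  obtain ⟨p, rfl⟩ := hf
  exact ⟨-p, (map_neg φ p).symm⟩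

lemma IsIntPoly.sub {f g : K} (hf : IsIntPoly f) (hg : IsIntPoly g) : IsIntPoly (f - g) :=
  (sub_eq_add_neg f g) ▸ IsIntPoly.add hf (IsIntPoly.neg hg)

lemma isIntPoly_zero : IsIntPoly 0 := (isIntPoly_iff 0).mpr ⟨0, (map_zero φ).symm⟩

lemma isIntPoly_Xpow (n : ℕ) : IsIntPoly (RatFunc.X ^ n) :=
  (isIntPoly_iff _).mpr ⟨X ^ n, by rw [map_pow, φ_X]⟩

def M (a b c : K) : Matrix (Fin 3) (Fin 3) K := !![1,a,c;0,1,b;0,0,1]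

lemma M_congr {a b c a' b' c' : K} (ha : a = a') (hb : b = b') (hc : c = c') :
    M a b c = M a' b' c' := by rw [ha, hb, hc]

lemma M_mul (a b c a' b' c' : K) :
    M a b c * M a' b' c' = M (a+a') (b+b') (c+c'+a*b') := by
  ext i j
  fin_cases i <;> fin_cases j <;>
    simp [M, Matrix.mul_apply, Fin.sum_univ_succ, Matrix.vecHead, Matrix.vecTail] <;> ring

lemma M_zero : M 0 0 0 = (1 : Matrix (Fin 3) (Fin 3) K) := by
  ext i j
  fin_cases i <;> fin_cases j <;> simp [M, Matrix.one_apply, Matrix.vecHead, Matrix.vecTail]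

def Uu (a b c : K) : GL (Fin 3) K :=
  ⟨M a b c, M (-a) (-b) (a*b - c),
    by rw [M_mul, show M (a + -a) (b + -b) (c + (a*b-c) + a * -b) = M 0 0 0 from
      M_congr (by ring) (by ring) (by ring), M_zero],
    by rw [M_mul, show M (-a + a) (-b + b) ((a*b-c) + c + -a * b) = M 0 0 0 from
      M_congr (by ring) (by ring) (by ring), M_zero]⟩

lemma Uu_val (a b c : K) : (Uu a b c : Matrix (Fin 3) (Fin 3) K) = M a b c := rfl

lemma Uu_mul (a b c a' b' c' : K) :
    Uu a b c * Uu a' b' c' = Uu (a+a') (b+b') (c+c'+a*b') := Units.ext (M_mul a b c a' b' c')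

lemma Uu_inv (a b c : K) : (Uu a b c)⁻¹ = Uu (-a) (-b) (a*b - c) :=
  Units.ext (by simp [Uu, M_congr (by ring : -a*-b - (a*b-c) = c) rfl rfl])

lemma Uu_congr {a b c a' b' c' : K} (ha : a = a') (hb : b = b') (hc : c = c') :
    Uu a b c = Uu a' b' c' := by rw [ha, hb, hc]

lemma Uu_one : Uu 0 0 0 = 1 := Units.ext M_zero

/-! ## Membership in the closure -/

def N : Subgroup (GL (Fin 3) K) := Subgroup.closure genSetR

lemma hA (i : ℕ) : Uu (RatFunc.X ^ i) 0 (RatFunc.X ^ (2*i+1)) ∈ N :=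
  Subgroup.subset_closure ⟨i, Or.inl rfl⟩

lemma hC (i : ℕ) : Uu 0 (RatFunc.X ^ i) (RatFunc.X ^ (2*i+1)) ∈ N :=
  Subgroup.subset_closure ⟨i, Or.inr (Or.inr (Or.inl rfl))⟩

lemma hZX (k : ℕ) : Uu 0 0 (RatFunc.X ^ k) ∈ N := by
  have h := mul_mem (mul_mem (mul_mem (hA 0) (hC k)) (inv_mem (hA 0))) (inv_mem (hC k))
  rw [Uu_inv, Uu_inv, Uu_mul, Uu_mul, Uu_mul] at h
  convert h using 1
  exact Uu_congr (by ring) (by ring) (by ring)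

def TZ : AddSubgroup K where
  carrier := {c | Uu 0 0 c ∈ N}
  zero_mem' := show Uu 0 0 0 ∈ N from Uu_one ▸ one_mem N
  add_mem' := by
    intro x y hx hy
    have h := mul_mem (show Uu 0 0 x ∈ N from hx) (show Uu 0 0 y ∈ N from hy)
    rw [Uu_mul] at h
    show Uu 0 0 (x + y) ∈ N
    convert h using 1
    exact Uu_congr (by ring) (by ring) (by ring)
  neg_mem' := by
    intro x hx
    have h := inv_mem (show Uu 0 0 x ∈ N from hx)
    rw [Uu_inv] at h
    show Uu 0 0 (-x) ∈ N
    convert h using 1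
    exact Uu_congr (by ring) (by ring) (by ring)

lemma phi_monomial (n : ℕ) (a : ℤ) : φ (monomial n a) = a • RatFunc.X ^ n := by
  rw [← C_mul_X_pow_eq_monomial, map_mul, map_pow, φ_X, zsmul_eq_mul]
  congr 1
  rw [show (C a : ℤ[X]) = (a : ℤ[X]) by simp, map_intCast]

lemma hZ (p : ℤ[X]) : Uu 0 0 (φ p) ∈ N := by
  show φ p ∈ TZ
  induction p using Polynomial.induction_on' with
  | add p q hp hq => rw [map_add]; exact TZ.add_mem hp hq
  | monomial n a => rw [phi_monomial]; exact TZ.zsmul_mem (hZX n) a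

def TA : AddSubgroup K where
  carrier := {a | Uu a 0 0 ∈ N}
  zero_mem' := show Uu 0 0 0 ∈ N from Uu_one ▸ one_mem N
  add_mem' := by
    intro x y hx hy
    have h := mul_mem (show Uu x 0 0 ∈ N from hx) (show Uu y 0 0 ∈ N from hy)
    rw [Uu_mul] at h
    show Uu (x + y) 0 0 ∈ N
    convert h using 1
    exact Uu_congr rfl (by ring) (by ring)
  neg_mem' := by
    intro x hx
    have h := inv_mem (show Uu x 0 0 ∈ N from hx)
    rw [Uu_inv] at h
    show Uu (-x) 0 0 ∈ N
    convert h using 1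
    exact Uu_congr rfl (by ring) (by ring)

lemma hAX (i : ℕ) : RatFunc.X ^ i ∈ TA := by
  have h := mul_mem (hA i) (inv_mem (hZX (2*i+1)))
  rw [Uu_inv, Uu_mul] at h
  show Uu (RatFunc.X ^ i) 0 0 ∈ N
  convert h using 1
  exact Uu_congr (by ring) (by ring) (by ring)

lemma hAp (p : ℤ[X]) : Uu (φ p) 0 0 ∈ N := by
  show φ p ∈ TA
  induction p using Polynomial.induction_on' with
  | add p q hp hq => rw [map_add]; exact TA.add_mem hp hq
  | monomial n a => rw [phi_monomial]; exact TA.zsmul_mem (hAX n) a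

def TB : AddSubgroup K where
  carrier := {b | Uu 0 b 0 ∈ N}
  zero_mem' := show Uu 0 0 0 ∈ N from Uu_one ▸ one_mem N
  add_mem' := by
    intro x y hx hy
    have h := mul_mem (show Uu 0 x 0 ∈ N from hx) (show Uu 0 y 0 ∈ N from hy)
    rw [Uu_mul] at h
    show Uu 0 (x + y) 0 ∈ N
    convert h using 1
    exact Uu_congr (by ring) rfl (by ring)
  neg_mem' := by
    intro x hx
    have h := inv_mem (show Uu 0 x 0 ∈ N from hx)
    rw [Uu_inv] at h
    show Uu 0 (-x) 0 ∈ N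
    convert h using 1
    exact Uu_congr (by ring) rfl (by ring)

lemma hBX (i : ℕ) : RatFunc.X ^ i ∈ TB := by
  have h := mul_mem (hC i) (inv_mem (hZX (2*i+1)))
  rw [Uu_inv, Uu_mul] at h
  show Uu 0 (RatFunc.X ^ i) 0 ∈ N
  convert h using 1
  exact Uu_congr (by ring) (by ring) (by ring)

lemma hBp (p : ℤ[X]) : Uu 0 (φ p) 0 ∈ N := by
  show φ p ∈ TB
  induction p using Polynomial.induction_on' with
  | add p q hp hq => rw [map_add]; exact TB.add_mem hp hq
  | monomial n a => rw [phi_monomial]; exact TB.zsmul_mem (hBX n) a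

lemma hUu (p q r : ℤ[X]) : Uu (φ p) (φ q) (φ r) ∈ N := by
  have h := mul_mem (mul_mem (hAp p) (hBp q)) (hZ (r - p * q))
  rw [Uu_mul, Uu_mul, map_sub, map_mul] at h
  convert h using 1
  exact Uu_congr (by ring) (by ring) (by ring)


/-! ## The unitriangular-integer subgroup -/

def Wpred (g : GL (Fin 3) K) : Prop :=
  (∀ i j : Fin 3, j < i → (g : Matrix (Fin 3) (Fin 3) K) i j = 0) ∧
  (∀ i : Fin 3, (g : Matrix (Fin 3) (Fin 3) K) i i = 1) ∧
  IsIntPoly ((g : Matrix (Fin 3) (Fin 3) K) 0 1) ∧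
  IsIntPoly ((g : Matrix (Fin 3) (Fin 3) K) 0 2) ∧
  IsIntPoly ((g : Matrix (Fin 3) (Fin 3) K) 1 2)

lemma val_eq_M (g : GL (Fin 3) K)
    (h0 : ∀ i j : Fin 3, j < i → (g : Matrix (Fin 3) (Fin 3) K) i j = 0)
    (h1 : ∀ i : Fin 3, (g : Matrix (Fin 3) (Fin 3) K) i i = 1) :
    (g : Matrix (Fin 3) (Fin 3) K) =
      M ((g : Matrix (Fin 3) (Fin 3) K) 0 1) ((g : Matrix (Fin 3) (Fin 3) K) 1 2)
        ((g : Matrix (Fin 3) (Fin 3) K) 0 2) := by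
  ext i j
  fin_cases i <;> fin_cases j <;>
    simp [M, Matrix.vecHead, Matrix.vecTail] <;>
    first
      | exact h1 _
      | exact h0 _ _ (by decide)

lemma wpred_of (g : GL (Fin 3) K) (a b c : K)
    (h : (g : Matrix (Fin 3) (Fin 3) K) = M a b c)
    (ha : IsIntPoly a) (hb : IsIntPoly b) (hc : IsIntPoly c) : Wpred g := by
  refine ⟨?_, ?_, ?_, ?_, ?_⟩
  · intro i j hij
    rw [h]
    fin_cases i <;> fin_cases j <;>
      simp [M, Matrix.vecHead, Matrix.vecTail] <;>
      exact absurd hij (by decide)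
  · intro i
    rw [h]
    fin_cases i <;> simp [M, Matrix.vecHead, Matrix.vecTail]
  · rw [h]; simpa [M, Matrix.vecHead, Matrix.vecTail] using ha
  · rw [h]; simpa [M, Matrix.vecHead, Matrix.vecTail] using hc
  · rw [h]; simpa [M, Matrix.vecHead, Matrix.vecTail] using hb

lemma inv_val_of {g : GL (Fin 3) K} {a b c : K}
    (h : (g : Matrix (Fin 3) (Fin 3) K) = M a b c) :
    ((g⁻¹ : GL (Fin 3) K) : Matrix (Fin 3) (Fin 3) K) = M (-a) (-b) (a*b - c) := by
  have hg : g = Uu a b c := Units.ext h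
  rw [hg, Uu_inv, Uu_val]

def W : Subgroup (GL (Fin 3) K) where
  carrier := {g | Wpred g}
  one_mem' := wpred_of 1 0 0 0 (by rw [Units.val_one, ← M_zero]) isIntPoly_zero
    isIntPoly_zero isIntPoly_zero
  mul_mem' := by
    rintro g h ⟨hg0, hg1, ha, hc, hb⟩ ⟨hh0, hh1, ha', hc', hb'⟩
    have hm := val_eq_M g hg0 hg1
    have hm' := val_eq_M h hh0 hh1
    exact wpred_of (g * h)
      ((g : Matrix (Fin 3) (Fin 3) K) 0 1 + (h : Matrix (Fin 3) (Fin 3) K) 0 1)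
      ((g : Matrix (Fin 3) (Fin 3) K) 1 2 + (h : Matrix (Fin 3) (Fin 3) K) 1 2)
      ((g : Matrix (Fin 3) (Fin 3) K) 0 2 + (h : Matrix (Fin 3) (Fin 3) K) 0 2 +
        (g : Matrix (Fin 3) (Fin 3) K) 0 1 * (h : Matrix (Fin 3) (Fin 3) K) 1 2)
      (by conv_lhs => rw [Units.val_mul, hm, hm']
          rw [M_mul])
      (IsIntPoly.add ha ha') (IsIntPoly.add hb hb')
      (IsIntPoly.add (IsIntPoly.add hc hc') (IsIntPoly.mul ha hb'))
  inv_mem' := by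
    rintro g ⟨hg0, hg1, ha, hc, hb⟩
    have hm := val_eq_M g hg0 hg1
    exact wpred_of g⁻¹ _ _ _ (inv_val_of hm)
      (IsIntPoly.neg ha) (IsIntPoly.neg hb)
      (IsIntPoly.sub (IsIntPoly.mul ha hb) hc)

lemma gen_subset_W : genSetR ⊆ (W : Set (GL (Fin 3) K)) := by
  rintro g ⟨i, hg | hg | hg | hg⟩
  · exact wpred_of g _ _ _ hg (isIntPoly_Xpow i) isIntPoly_zero (isIntPoly_Xpow (2*i+1))
  · exact wpred_of g _ _ _ hg (IsIntPoly.neg (isIntPoly_Xpow i)) isIntPoly_zero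
      (isIntPoly_Xpow (2*i+1))
  · exact wpred_of g _ _ _ hg isIntPoly_zero (isIntPoly_Xpow i) (isIntPoly_Xpow (2*i+1))
  · exact wpred_of g _ _ _ hg isIntPoly_zero (IsIntPoly.neg (isIntPoly_Xpow i))
      (isIntPoly_Xpow (2*i+1))

end St17

/-- Let `N ≤ GL(3, ℚ(X))` be the subgroup generated by
`{ A_i, B_i, C_i, D_i : i ∈ ℕ }`. Then `g ∈ N` iff `g` is upper unitriangular and its
`(1,2)`, `(1,3)`, `(2,3)` entries are polynomials with integer coefficients. -/
theorem mem_N_iff_unitriangular_int_entries (g : GL (Fin 3) (RatFunc ℚ)) :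
    g ∈ Subgroup.closure genSetR ↔
      ((∀ i j : Fin 3, j < i → (g : Matrix (Fin 3) (Fin 3) (RatFunc ℚ)) i j = 0) ∧
       (∀ i : Fin 3, (g : Matrix (Fin 3) (Fin 3) (RatFunc ℚ)) i i = 1) ∧
       IsIntPoly ((g : Matrix (Fin 3) (Fin 3) (RatFunc ℚ)) 0 1) ∧
       IsIntPoly ((g : Matrix (Fin 3) (Fin 3) (RatFunc ℚ)) 0 2) ∧
       IsIntPoly ((g : Matrix (Fin 3) (Fin 3) (RatFunc ℚ)) 1 2)) := by

  constructor
  · intro hg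
    exact (Subgroup.closure_le St17.W).mpr St17.gen_subset_W hg
  · rintro ⟨h0, h1, ha, hc, hb⟩
    have hm := St17.val_eq_M g h0 h1
    rw [St17.isIntPoly_iff] at ha hb hc
    obtain ⟨p, hp⟩ := ha
    obtain ⟨q, hq⟩ := hb
    obtain ⟨r, hr⟩ := hc
    have hg : g = St17.Uu (St17.φ p) (St17.φ q) (St17.φ r) :=
      Units.ext (by rw [St17.Uu_val, ← hp, ← hq, ← hr]; exact hm)
    rw [hg]
    exact St17.hUu p q r
end
end

section
/- Work in GL(3, ℚ(X)), where ℚ(X) is the field of rational functions over ℚ, and regard the matrices A_i, B_i, C_i, D_i (i ∈ ℕ) as elements of GL(3, ℚ(X)) (each has determinant 1, hence is invertible). Let N be the subgroup of GL(3, ℚ(X)) generated by { A_i, B_i, C_i, D_i : i ∈ ℕ } and let M be the subsemigroup generated by the same set. Then M·[N,N] = N: every n ∈ N can be written as n = m·c with m ∈ M and c ∈ [N,N]. -/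
noncomputable section

namespace St18Aux

abbrev K := RatFunc ℚ

def Tm (a b c : K) : Matrix (Fin 3) (Fin 3) K := !![1,a,c;0,1,b;0,0,1]

lemma Tm_mul (a b c a' b' c' : K) :
    Tm a b c * Tm a' b' c' = Tm (a+a') (b+b') (c+c'+a*b') := by
  simp [Tm, Matrix.mul_fin_three]; ring_nf <;> simp

lemma Tm_one : Tm 0 0 0 = 1 := by
  simp [Tm, Matrix.one_fin_three]

def T (a b c : K) : GL (Fin 3) K :=
  ⟨Tm a b c, Tm (-a) (-b) (a*b-c), by
    rw [Tm_mul, show a + -a = (0:K) by ring, show b + -b = (0:K) by ring,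
      show c + (a*b-c) + a*(-b) = (0:K) by ring, Tm_one], by
    rw [Tm_mul, show -a + a = (0:K) by ring, show -b + b = (0:K) by ring,
      show a*b - c + c + -a*b = (0:K) by ring, Tm_one]⟩

lemma T_val (a b c : K) : (T a b c : Matrix (Fin 3) (Fin 3) K) = Tm a b c := rfl

lemma T_congr {a b c a' b' c' : K} (ha : a = a') (hb : b = b') (hc : c = c') :
    T a b c = T a' b' c' := by rw [ha, hb, hc]

lemma Tmul (a b c a' b' c' : K) :
    T a b c * T a' b' c' = T (a+a') (b+b') (c+c'+a*b') :=
  Units.ext (Tm_mul a b c a' b' c')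

lemma T_one : T 0 0 0 = 1 := Units.ext Tm_one

lemma Tinv (a b c : K) : (T a b c)⁻¹ = T (-a) (-b) (a*b-c) := by
  rw [inv_eq_iff_mul_eq_one, Tmul]
  rw [show a + -a = (0:K) by ring, show b + -b = (0:K) by ring,
      show c + (a*b-c) + a * -b = (0:K) by ring, T_one]

/-- The embedding `ℤ[X] → ℚ(X)`. -/
def ι : Polynomial ℤ →+* K :=
  (algebraMap (Polynomial ℚ) K).comp (Polynomial.mapRingHom (Int.castRingHom ℚ))

lemma ι_X : ι Polynomial.X = RatFunc.X := by
  simp [ι, RatFunc.algebraMap_X]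

lemma ι_X_pow (i : ℕ) : ι (Polynomial.X ^ i) = RatFunc.X ^ i := by
  rw [map_pow, ι_X]

/-- Generators as `T`. -/
lemma genA (i : ℕ) : T (RatFunc.X ^ i) 0 (RatFunc.X ^ (2*i+1)) ∈ genSetR :=
  ⟨i, Or.inl rfl⟩

lemma genB (i : ℕ) : T (-RatFunc.X ^ i) 0 (RatFunc.X ^ (2*i+1)) ∈ genSetR :=
  ⟨i, Or.inr (Or.inl rfl)⟩

lemma genC (i : ℕ) : T 0 (RatFunc.X ^ i) (RatFunc.X ^ (2*i+1)) ∈ genSetR :=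
  ⟨i, Or.inr (Or.inr (Or.inl rfl))⟩

lemma genD (i : ℕ) : T 0 (-RatFunc.X ^ i) (RatFunc.X ^ (2*i+1)) ∈ genSetR :=
  ⟨i, Or.inr (Or.inr (Or.inr rfl))⟩

local notation "N" => Subgroup.closure genSetR
local notation "M" => Subsemigroup.closure genSetR

/-- Step 1: every element of `N` has the `T (ι a) (ι b) (ι c)` form. -/
lemma good_of_mem_N {g : GL (Fin 3) K} (hg : g ∈ N) :
    ∃ a b c : Polynomial ℤ, g = T (ι a) (ι b) (ι c) := by
  refine Subgroup.closure_induction ?_ ?_ ?_ ?_ hg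
  · rintro g ⟨i, hA | hB | hC | hD⟩
    · exact ⟨Polynomial.X ^ i, 0, Polynomial.X ^ (2*i+1),
        Units.ext (by rw [hA, T_val]; simp [ι_X_pow, Tm, AmatR])⟩
    · exact ⟨-Polynomial.X ^ i, 0, Polynomial.X ^ (2*i+1),
        Units.ext (by rw [hB, T_val]; simp [ι_X_pow, map_neg, Tm, BmatR])⟩
    · exact ⟨0, Polynomial.X ^ i, Polynomial.X ^ (2*i+1),
        Units.ext (by rw [hC, T_val]; simp [ι_X_pow, Tm, CmatR])⟩
    · exact ⟨0, -Polynomial.X ^ i, Polynomial.X ^ (2*i+1),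
        Units.ext (by rw [hD, T_val]; simp [ι_X_pow, map_neg, Tm, DmatR])⟩
  · exact ⟨0, 0, 0, by simp only [map_zero, T_one]⟩
  · rintro x y _ _ ⟨a, b, c, rfl⟩ ⟨a', b', c', rfl⟩
    exact ⟨a + a', b + b', c + c' + a * b', by
      rw [Tmul]; exact T_congr (by simp) (by simp) (by simp)⟩
  · rintro x _ ⟨a, b, c, rfl⟩
    exact ⟨-a, -b, a*b - c, by
      rw [Tinv]; exact T_congr (by simp) (by simp) (by simp)⟩

/-- Step 2a: realizing any `(a, 0)` top row in the semigroup. -/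
lemma SA_aux (x : K) (h : ∃ c : Polynomial ℤ, T x 0 (ι c) ∈ M) (i : ℕ) :
    (∃ c : Polynomial ℤ, T (x + RatFunc.X ^ i) 0 (ι c) ∈ M) ∧
    (∃ c : Polynomial ℤ, T (x - RatFunc.X ^ i) 0 (ι c) ∈ M) := by
  obtain ⟨c, hc⟩ := h
  constructor
  · refine ⟨c + Polynomial.X ^ (2*i+1), ?_⟩
    have := Subsemigroup.mul_mem _ hc (Subsemigroup.subset_closure (genA i))
    rwa [Tmul, show (0:K) + 0 = 0 by ring,
      show ι c + RatFunc.X ^ (2*i+1) + x * 0 = ι (c + Polynomial.X ^ (2*i+1)) by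
        simp [map_add, ι_X_pow]] at this
  · refine ⟨c + Polynomial.X ^ (2*i+1), ?_⟩
    have := Subsemigroup.mul_mem _ hc (Subsemigroup.subset_closure (genB i))
    rwa [Tmul, show x + -RatFunc.X ^ i = x - RatFunc.X ^ i by ring,
      show (0:K) + 0 = 0 by ring,
      show ι c + RatFunc.X ^ (2*i+1) + x * 0 = ι (c + Polynomial.X ^ (2*i+1)) by
        simp [map_add, ι_X_pow]] at this

lemma SA_zero : ∃ c : Polynomial ℤ, T (0:K) 0 (ι c) ∈ M := by
  refine ⟨2 * Polynomial.X, ?_⟩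
  have := Subsemigroup.mul_mem _
    (Subsemigroup.subset_closure (genA 0)) (Subsemigroup.subset_closure (genB 0))
  rwa [Tmul, show RatFunc.X ^ 0 + -RatFunc.X ^ 0 = (0:K) by ring,
    show (0:K) + 0 = 0 by ring,
    show RatFunc.X ^ (2*0+1) + RatFunc.X ^ (2*0+1) + RatFunc.X ^ 0 * 0
        = ι (2 * Polynomial.X) by simp [map_mul, ι_X, map_ofNat]; ring] at this

lemma SA_int (n : ℕ) : ∀ k : ℤ, ∃ c : Polynomial ℤ, T ((k:K) * RatFunc.X ^ n) 0 (ι c) ∈ M := by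
  intro k
  induction k using Int.induction_on with
  | zero => simpa using SA_zero
  | succ k ih =>
    obtain ⟨c, hc⟩ := (SA_aux _ ih n).1
    exact ⟨c, by rwa [T_congr (a' := (((k:ℤ)+1:ℤ):K) * RatFunc.X ^ n)
      (by push_cast; ring) rfl rfl] at hc⟩
  | pred k ih =>
    obtain ⟨c, hc⟩ := (SA_aux _ ih n).2
    exact ⟨c, by rwa [T_congr (a' := ((-(k:ℤ)-1:ℤ):K) * RatFunc.X ^ n)
      (by push_cast; ring) rfl rfl] at hc⟩

lemma ι_monomial (n : ℕ) (k : ℤ) :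
    ι (Polynomial.monomial n k) = (k:K) * RatFunc.X ^ n := by
  rw [← Polynomial.C_mul_X_pow_eq_monomial, map_mul, map_pow, ι_X,
    show Polynomial.C k = (k : Polynomial ℤ) from Polynomial.C_eq_intCast k, map_intCast]

lemma SA (a : Polynomial ℤ) : ∃ c : Polynomial ℤ, T (ι a) 0 (ι c) ∈ M := by
  induction a using Polynomial.induction_on' with
  | add p q hp hq =>
    obtain ⟨c1, h1⟩ := hp
    obtain ⟨c2, h2⟩ := hq
    refine ⟨c1 + c2, ?_⟩
    have := Subsemigroup.mul_mem _ h1 h2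
    rwa [Tmul, show (0:K) + 0 = 0 by ring,
      show ι c1 + ι c2 + ι p * 0 = ι (c1 + c2) by rw [map_add]; ring,
      show ι p + ι q = ι (p + q) by rw [map_add]] at this
  | monomial n k =>
    obtain ⟨c, hc⟩ := SA_int n k
    exact ⟨c, by rwa [← ι_monomial] at hc⟩

/-- Step 2b: realizing any `(0, b)` lower entry in the semigroup. -/
lemma SB_aux (x : K) (h : ∃ c : Polynomial ℤ, T 0 x (ι c) ∈ M) (i : ℕ) :
    (∃ c : Polynomial ℤ, T 0 (x + RatFunc.X ^ i) (ι c) ∈ M) ∧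
    (∃ c : Polynomial ℤ, T 0 (x - RatFunc.X ^ i) (ι c) ∈ M) := by
  obtain ⟨c, hc⟩ := h
  constructor
  · refine ⟨c + Polynomial.X ^ (2*i+1), ?_⟩
    have := Subsemigroup.mul_mem _ hc (Subsemigroup.subset_closure (genC i))
    rwa [Tmul, show (0:K) + 0 = 0 by ring,
      show ι c + RatFunc.X ^ (2*i+1) + 0 * RatFunc.X ^ i = ι (c + Polynomial.X ^ (2*i+1)) by
        simp [map_add, ι_X_pow]] at this
  · refine ⟨c + Polynomial.X ^ (2*i+1), ?_⟩
    have := Subsemigroup.mul_mem _ hc (Subsemigroup.subset_closure (genD i))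
    rwa [Tmul, show x + -RatFunc.X ^ i = x - RatFunc.X ^ i by ring,
      show (0:K) + 0 = 0 by ring,
      show ι c + RatFunc.X ^ (2*i+1) + 0 * -RatFunc.X ^ i = ι (c + Polynomial.X ^ (2*i+1)) by
        simp [map_add, ι_X_pow]] at this

lemma SB_zero' : ∃ c : Polynomial ℤ, T 0 (0:K) (ι c) ∈ M := by
  refine ⟨2 * Polynomial.X, ?_⟩
  have := Subsemigroup.mul_mem _
    (Subsemigroup.subset_closure (genC 0)) (Subsemigroup.subset_closure (genD 0))
  rwa [Tmul, show RatFunc.X ^ 0 + -RatFunc.X ^ 0 = (0:K) by ring,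
    show (0:K) + 0 = 0 by ring,
    show RatFunc.X ^ (2*0+1) + RatFunc.X ^ (2*0+1) + 0 * -RatFunc.X ^ 0
        = ι (2 * Polynomial.X) by simp [map_mul, ι_X, map_ofNat]; ring] at this

lemma SB_int (n : ℕ) : ∀ k : ℤ, ∃ c : Polynomial ℤ, T 0 ((k:K) * RatFunc.X ^ n) (ι c) ∈ M := by
  intro k
  induction k using Int.induction_on with
  | zero => simpa using SB_zero'
  | succ k ih =>
    obtain ⟨c, hc⟩ := (SB_aux _ ih n).1
    exact ⟨c, by rwa [T_congr (b := ((k:ℤ):K) * RatFunc.X ^ n + RatFunc.X ^ n)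
      (a := 0) (c := ι c) rfl
      (b' := (((k:ℤ)+1:ℤ):K) * RatFunc.X ^ n) (by push_cast; ring) rfl] at hc⟩
  | pred k ih =>
    obtain ⟨c, hc⟩ := (SB_aux _ ih n).2
    exact ⟨c, by rwa [T_congr (b := ((-(k:ℤ):ℤ):K) * RatFunc.X ^ n - RatFunc.X ^ n)
      (a := 0) (c := ι c) rfl
      (b' := ((-(k:ℤ)-1:ℤ):K) * RatFunc.X ^ n) (by push_cast; ring) rfl] at hc⟩

lemma SB (b : Polynomial ℤ) : ∃ c : Polynomial ℤ, T 0 (ι b) (ι c) ∈ M := by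
  induction b using Polynomial.induction_on' with
  | add p q hp hq =>
    obtain ⟨c1, h1⟩ := hp
    obtain ⟨c2, h2⟩ := hq
    refine ⟨c1 + c2, ?_⟩
    have := Subsemigroup.mul_mem _ h1 h2
    rwa [Tmul, show (0:K) + 0 = 0 by ring,
      show ι c1 + ι c2 + 0 * ι q = ι (c1 + c2) by rw [map_add]; ring,
      show ι p + ι q = ι (p + q) by rw [map_add]] at this
  | monomial n k =>
    obtain ⟨c, hc⟩ := SB_int n k
    exact ⟨c, by rwa [← ι_monomial] at hc⟩

open scoped commutatorElement in
/-- Step 3: central elements with `ℤ[X]` entry lie in `[N,N]`. -/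
lemma Tcomm (a c b' c' : K) : ⁅T a 0 c, T 0 b' c'⁆ = T 0 0 (a * b') := by
  rw [commutatorElement_def, Tinv, Tinv, Tmul, Tmul, Tmul]
  exact T_congr (by ring) (by ring) (by ring)

lemma mem_N_of_gen {g : GL (Fin 3) K} (h : g ∈ genSetR) : g ∈ N :=
  Subgroup.subset_closure h

lemma Z_X_pow (i : ℕ) : T 0 0 (RatFunc.X ^ i) ∈ ⁅N, N⁆ := by
  have := Subgroup.commutator_mem_commutator
    (mem_N_of_gen (genA i)) (mem_N_of_gen (genC 0))
  rwa [Tcomm, show RatFunc.X ^ i * RatFunc.X ^ 0 = RatFunc.X ^ i by ring] at this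

lemma Z_mul (x y : K) : T 0 0 x * T 0 0 y = T 0 0 (x + y) := by
  rw [Tmul]; exact T_congr (by ring) (by ring) (by ring)

lemma Z_inv (x : K) : (T 0 0 x)⁻¹ = T 0 0 (-x) := by
  rw [Tinv]; exact T_congr (by ring) (by ring) (by ring)

lemma Z_int (n : ℕ) : ∀ k : ℤ, T 0 0 ((k:K) * RatFunc.X ^ n) ∈ ⁅N, N⁆ := by
  intro k
  induction k using Int.induction_on with
  | zero => rw [show ((0:ℤ):K) * RatFunc.X ^ n = 0 by push_cast; ring, T_one]
            exact Subgroup.one_mem _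
  | succ k ih =>
    have := Subgroup.mul_mem _ ih (Z_X_pow n)
    rwa [Z_mul, show ((k:ℤ):K) * RatFunc.X ^ n + RatFunc.X ^ n
      = (((k:ℤ)+1:ℤ):K) * RatFunc.X ^ n by push_cast; ring] at this
  | pred k ih =>
    have := Subgroup.mul_mem _ ih (Subgroup.inv_mem _ (Z_X_pow n))
    rwa [Z_inv, Z_mul, show ((-(k:ℤ):ℤ):K) * RatFunc.X ^ n + -RatFunc.X ^ n
      = ((-(k:ℤ)-1:ℤ):K) * RatFunc.X ^ n by push_cast; ring] at this

lemma Z_poly (p : Polynomial ℤ) : T 0 0 (ι p) ∈ ⁅N, N⁆ := by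
  induction p using Polynomial.induction_on' with
  | add p q hp hq =>
    have := Subgroup.mul_mem _ hp hq
    rwa [Z_mul, ← map_add] at this
  | monomial n k => rw [ι_monomial]; exact Z_int n k

end St18Aux

open St18Aux in
theorem M_mul_commutator_eq_N :
    ∀ nn ∈ Subgroup.closure genSetR,
      ∃ mm ∈ Subsemigroup.closure genSetR,
        ∃ c ∈ ⁅Subgroup.closure genSetR, Subgroup.closure genSetR⁆,
          nn = mm * c := by
  intro nn hnn
  obtain ⟨a, b, c, rfl⟩ := good_of_mem_N hnn
  obtain ⟨c1, h1⟩ := SA a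
  obtain ⟨c2, h2⟩ := SB b
  refine ⟨T (ι a) (ι b) (ι (c1 + c2 + a * b)), ?_,
    T 0 0 (ι (c - (c1 + c2 + a * b))), Z_poly _, ?_⟩
  · have := Subsemigroup.mul_mem _ h1 h2
    rwa [Tmul, show ι a + 0 = ι a by ring, show (0:K) + ι b = ι b by ring,
      show ι c1 + ι c2 + ι a * ι b = ι (c1 + c2 + a * b) by
        rw [map_add, map_add, map_mul]] at this
  · rw [Tmul]
    exact T_congr (by ring) (by ring) (by
      rw [map_sub]; ring)
end
end

section
/- Work in GL(3, ℚ(X)), where ℚ(X) is the field of rational functions over ℚ, and regard the matrices A_i, B_i, C_i, D_i (i ∈ ℕ) as elements of GL(3, ℚ(X)) (each has determinant 1, hence is invertible). Let N be the subgroup of GL(3, ℚ(X)) generated by { A_i, B_i, C_i, D_i : i ∈ ℕ }. Then the commutator subgroup [N,N] consists exactly of those g ∈ GL(3, ℚ(X)) whose matrix is upper unitriangular with (1,2) entry 0, (2,3) entry 0, and (1,3) entry in the image of ℤ[X] in ℚ(X) (i.e., a polynomial with integer coefficients). -/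
noncomputable section

def Hm (a b c : RatFunc ℚ) : Matrix (Fin 3) (Fin 3) (RatFunc ℚ) :=
  !![1, a, c; 0, 1, b; 0, 0, 1]

lemma Hm_mul (a b c a' b' c' : RatFunc ℚ) :
    Hm a b c * Hm a' b' c' = Hm (a + a') (b + b') (c + c' + a * b') := by
  simp [Hm, Matrix.mul_fin_three]
  ring_nf
  simp

lemma Hm_one : Hm 0 0 0 = 1 := by
  simp [Hm, Matrix.one_fin_three]

lemma Hm_mul_inv (a b c : RatFunc ℚ) :
    Hm a b c * Hm (-a) (-b) (a * b - c) = 1 := by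
  rw [Hm_mul, ← Hm_one]; congr 1 <;> ring

lemma Hm_inv_mul (a b c : RatFunc ℚ) :
    Hm (-a) (-b) (a * b - c) * Hm a b c = 1 := by
  rw [Hm_mul, ← Hm_one]; congr 1 <;> ring

def triU (a b c : RatFunc ℚ) : GL (Fin 3) (RatFunc ℚ) :=
  ⟨Hm a b c, Hm (-a) (-b) (a * b - c), Hm_mul_inv a b c, Hm_inv_mul a b c⟩

lemma triU_coe (a b c : RatFunc ℚ) : ((triU a b c : GL (Fin 3) (RatFunc ℚ)) : Matrix (Fin 3) (Fin 3) (RatFunc ℚ)) = Hm a b c := rfl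

lemma triU_inv_coe (a b c : RatFunc ℚ) :
    (((triU a b c)⁻¹ : GL (Fin 3) (RatFunc ℚ)) : Matrix (Fin 3) (Fin 3) (RatFunc ℚ)) = Hm (-a) (-b) (a * b - c) := rfl

/-! IsIntPoly closure lemmas -/

lemma ip_zero : IsIntPoly 0 := ⟨0, by simp⟩

lemma ip_add {f g : RatFunc ℚ} (hf : IsIntPoly f) (hg : IsIntPoly g) : IsIntPoly (f + g) := by
  obtain ⟨p, hp⟩ := hf; obtain ⟨q, hq⟩ := hg
  exact ⟨p + q, by simp [hp, hq, Polynomial.map_add]⟩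

lemma ip_neg {f : RatFunc ℚ} (hf : IsIntPoly f) : IsIntPoly (-f) := by
  obtain ⟨p, hp⟩ := hf
  exact ⟨-p, by simp [hp, Polynomial.map_neg]⟩

lemma ip_mul {f g : RatFunc ℚ} (hf : IsIntPoly f) (hg : IsIntPoly g) : IsIntPoly (f * g) := by
  obtain ⟨p, hp⟩ := hf; obtain ⟨q, hq⟩ := hg
  exact ⟨p * q, by simp [hp, hq, Polynomial.map_mul]⟩

lemma ip_sub {f g : RatFunc ℚ} (hf : IsIntPoly f) (hg : IsIntPoly g) : IsIntPoly (f - g) := by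
  rw [sub_eq_add_neg]; exact ip_add hf (ip_neg hg)

lemma ip_Xpow (i : ℕ) : IsIntPoly (RatFunc.X ^ i) :=
  ⟨Polynomial.X ^ i, by simp [Polynomial.map_pow, map_pow, RatFunc.algebraMap_X]⟩

/-! The subgroup of unitriangular matrices with integer polynomial entries -/

lemma coe_inv_of {g : GL (Fin 3) (RatFunc ℚ)} {a b c : RatFunc ℚ}
    (h : (g : Matrix (Fin 3) (Fin 3) (RatFunc ℚ)) = Hm a b c) :
    ((g⁻¹ : GL (Fin 3) (RatFunc ℚ)) : Matrix (Fin 3) (Fin 3) (RatFunc ℚ))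
      = Hm (-a) (-b) (a * b - c) := by
  rw [Matrix.coe_units_inv, h]
  exact Matrix.inv_eq_right_inv (Hm_mul_inv a b c)

def Usub : Subgroup (GL (Fin 3) (RatFunc ℚ)) where
  carrier := {g | ∃ a b c, (g : Matrix (Fin 3) (Fin 3) (RatFunc ℚ)) = Hm a b c ∧
    IsIntPoly a ∧ IsIntPoly b ∧ IsIntPoly c}
  one_mem' := ⟨0, 0, 0, by rw [Units.val_one, Hm_one], ip_zero, ip_zero, ip_zero⟩
  mul_mem' := by
    rintro g h ⟨a, b, c, hg, ha, hb, hc⟩ ⟨a', b', c', hh, ha', hb', hc'⟩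
    exact ⟨a + a', b + b', c + c' + a * b',
      by rw [Units.val_mul, hg, hh, Hm_mul],
      ip_add ha ha', ip_add hb hb', ip_add (ip_add hc hc') (ip_mul ha hb')⟩
  inv_mem' := by
    rintro g ⟨a, b, c, hg, ha, hb, hc⟩
    exact ⟨-a, -b, a * b - c, coe_inv_of hg, ip_neg ha, ip_neg hb, ip_sub (ip_mul ha hb) hc⟩

lemma closure_le_Usub : Subgroup.closure genSetR ≤ Usub := by
  rw [Subgroup.closure_le]
  rintro g ⟨i, hA | hB | hC | hD⟩
  · exact ⟨RatFunc.X ^ i, 0, RatFunc.X ^ (2 * i + 1), hA, ip_Xpow i, ip_zero, ip_Xpow _⟩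
  · exact ⟨-RatFunc.X ^ i, 0, RatFunc.X ^ (2 * i + 1), hB, ip_neg (ip_Xpow i), ip_zero, ip_Xpow _⟩
  · exact ⟨0, RatFunc.X ^ i, RatFunc.X ^ (2 * i + 1), hC, ip_zero, ip_Xpow i, ip_Xpow _⟩
  · exact ⟨0, -RatFunc.X ^ i, RatFunc.X ^ (2 * i + 1), hD, ip_zero, ip_neg (ip_Xpow i), ip_Xpow _⟩

/-! The center-type subgroup -/

def Zsub : Subgroup (GL (Fin 3) (RatFunc ℚ)) where
  carrier := {g | ∃ c, (g : Matrix (Fin 3) (Fin 3) (RatFunc ℚ)) = Hm 0 0 c ∧ IsIntPoly c}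
  one_mem' := ⟨0, by rw [Units.val_one, Hm_one], ip_zero⟩
  mul_mem' := by
    rintro g h ⟨c, hg, hc⟩ ⟨c', hh, hc'⟩
    refine ⟨c + c', ?_, ip_add hc hc'⟩
    rw [Units.val_mul, hg, hh, Hm_mul]
    congr 1 <;> ring
  inv_mem' := by
    rintro g ⟨c, hg, hc⟩
    refine ⟨-c, ?_, ip_neg hc⟩
    rw [coe_inv_of hg]
    congr 1 <;> ring

lemma commutator_le_Zsub :
    ⁅Subgroup.closure genSetR, Subgroup.closure genSetR⁆ ≤ Zsub := by
  rw [Subgroup.commutator_le]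
  intro g hg h hh
  obtain ⟨a, b, c, hgm, ha, hb, hc⟩ := closure_le_Usub hg
  obtain ⟨a', b', c', hhm, ha', hb', hc'⟩ := closure_le_Usub hh
  refine ⟨a * b' - a' * b, ?_, ip_sub (ip_mul ha hb') (ip_mul ha' hb)⟩
  rw [commutatorElement_def, Units.val_mul, Units.val_mul, Units.val_mul,
    hgm, hhm, coe_inv_of hgm, coe_inv_of hhm, Hm_mul, Hm_mul, Hm_mul]
  congr 1 <;> ring

/-! Central units and commutators of triangular units -/

def zU (f : RatFunc ℚ) : GL (Fin 3) (RatFunc ℚ) := triU 0 0 f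

lemma zU_zero : zU 0 = 1 := Units.ext (by rw [Units.val_one]; exact Hm_one)

lemma zU_add (f g : RatFunc ℚ) : zU (f + g) = zU f * zU g := by
  apply Units.ext
  rw [zU, zU, zU, Units.val_mul, triU_coe, triU_coe, triU_coe, Hm_mul]
  congr 1 <;> ring

lemma zU_neg (f : RatFunc ℚ) : zU (-f) = (zU f)⁻¹ := by
  apply Units.ext
  rw [zU, zU, triU_coe, triU_inv_coe]
  congr 1 <;> ring

lemma triU_commutator (a b c a' b' c' : RatFunc ℚ) :
    @Bracket.bracket _ _ commutatorElement (triU a b c) (triU a' b' c') = zU (a * b' - a' * b) := by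
  apply Units.ext
  rw [commutatorElement_def, Units.val_mul, Units.val_mul, Units.val_mul,
    triU_coe, triU_coe, triU_inv_coe, triU_inv_coe, Hm_mul, Hm_mul, Hm_mul, zU, triU_coe]
  congr 1 <;> ring

lemma triU_A_mem (n : ℕ) : triU (RatFunc.X ^ n) 0 (RatFunc.X ^ (2 * n + 1)) ∈
    Subgroup.closure genSetR :=
  Subgroup.subset_closure ⟨n, Or.inl rfl⟩

lemma triU_C0_mem : triU 0 (RatFunc.X ^ 0) (RatFunc.X ^ 1) ∈ Subgroup.closure genSetR :=
  Subgroup.subset_closure ⟨0, Or.inr (Or.inr (Or.inl rfl))⟩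

lemma zU_Xpow_mem (n : ℕ) : zU (RatFunc.X ^ n) ∈
    ⁅Subgroup.closure genSetR, Subgroup.closure genSetR⁆ := by
  have h := Subgroup.commutator_mem_commutator (triU_A_mem n) triU_C0_mem
  rw [triU_commutator] at h
  have : RatFunc.X ^ n * RatFunc.X ^ 0 - 0 * (0 : RatFunc ℚ) = RatFunc.X ^ n := by ring
  rwa [this] at h

/-! The additive subgroup of `ℚ(X)` of values `f` with `zU f ∈ [N,N]` -/

def Tadd : AddSubgroup (RatFunc ℚ) where
  carrier := {f | zU f ∈ ⁅Subgroup.closure genSetR, Subgroup.closure genSetR⁆}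
  zero_mem' := by rw [Set.mem_setOf_eq, zU_zero]; exact Subgroup.one_mem _
  add_mem' := by
    intro f g hf hg
    rw [Set.mem_setOf_eq, zU_add]
    exact Subgroup.mul_mem _ hf hg
  neg_mem' := by
    intro f hf
    rw [Set.mem_setOf_eq, zU_neg]
    exact Subgroup.inv_mem _ hf

lemma intPoly_mem_Tadd (p : Polynomial ℤ) :
    algebraMap (Polynomial ℚ) (RatFunc ℚ) (p.map (Int.castRingHom ℚ)) ∈ Tadd := by
  induction p using Polynomial.induction_on' with
  | add p q hp hq =>
    rw [Polynomial.map_add, map_add]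
    exact Tadd.add_mem hp hq
  | monomial n a =>
    have h1 : (Polynomial.monomial n a).map (Int.castRingHom ℚ)
        = a • ((Polynomial.X : Polynomial ℚ) ^ n) := by
      rw [Polynomial.map_monomial, Polynomial.X_pow_eq_monomial, Polynomial.smul_monomial]
      norm_num
    rw [h1, map_zsmul]
    refine Tadd.zsmul_mem ?_ a
    have : algebraMap (Polynomial ℚ) (RatFunc ℚ) (Polynomial.X ^ n) = RatFunc.X ^ n := by
      rw [map_pow, RatFunc.algebraMap_X]
    rw [this]
    exact zU_Xpow_mem n

/-- Let `N ≤ GL(3, ℚ(X))` be the subgroup generated by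
`{ A_i, B_i, C_i, D_i : i ∈ ℕ }`. Then `[N,N]` consists exactly of the upper
unitriangular matrices with `(1,2)` entry `0`, `(2,3)` entry `0`, and `(1,3)` entry a
polynomial with integer coefficients. -/
theorem mem_commutator_N_iff (g : GL (Fin 3) (RatFunc ℚ)) :
    g ∈ ⁅Subgroup.closure genSetR, Subgroup.closure genSetR⁆ ↔
      ((∀ i j : Fin 3, j < i → (g : Matrix (Fin 3) (Fin 3) (RatFunc ℚ)) i j = 0) ∧
       (∀ i : Fin 3, (g : Matrix (Fin 3) (Fin 3) (RatFunc ℚ)) i i = 1) ∧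
       (g : Matrix (Fin 3) (Fin 3) (RatFunc ℚ)) 0 1 = 0 ∧
       (g : Matrix (Fin 3) (Fin 3) (RatFunc ℚ)) 1 2 = 0 ∧
       IsIntPoly ((g : Matrix (Fin 3) (Fin 3) (RatFunc ℚ)) 0 2)) := by
  constructor
  · intro hg
    obtain ⟨c, hgm, hc⟩ := commutator_le_Zsub hg
    refine ⟨?_, ?_, ?_, ?_, ?_⟩
    · intro i j hij
      fin_cases i <;> fin_cases j <;>
        first
          | exact absurd hij (by decide)
          | (rw [hgm]; simp [Hm, Matrix.vecHead, Matrix.vecTail])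
    · intro i
      fin_cases i <;> (rw [hgm]; simp [Hm, Matrix.vecHead, Matrix.vecTail])
    · rw [hgm]; simp [Hm]
    · rw [hgm]; simp [Hm]
    · rw [hgm]; simpa [Hm] using hc
  · rintro ⟨hlow, hdiag, h01, h12, hc⟩
    have hgm : (g : Matrix (Fin 3) (Fin 3) (RatFunc ℚ))
        = Hm 0 0 ((g : Matrix (Fin 3) (Fin 3) (RatFunc ℚ)) 0 2) := by
      ext i j
      fin_cases i <;> fin_cases j <;> simp [Hm]
      · exact hdiag 0
      · exact h01
      · exact hlow 1 0 (by decide)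
      · exact hdiag 1
      · exact h12
      · exact hlow 2 0 (by decide)
      · exact hlow 2 1 (by decide)
      · exact hdiag 2
    have hg : g = zU ((g : Matrix (Fin 3) (Fin 3) (RatFunc ℚ)) 0 2) :=
      Units.ext (by rw [zU, triU_coe]; exact hgm)
    obtain ⟨p, hp⟩ := hc
    rw [hg, hp]
    exact intPoly_mem_Tadd p
end
end
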